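/- arXiv:2305.14967 — 13 statements merged into one kernel-verified Lean document; each statement's English description precedes it below -/
import Mathlib

section
/- If S and T are perfect numerical semigroups with Frobenius number F, then S ∩ T is a perfect numerical semigroup with Frobenius number F. -/
def IsNumericalSemigroup (S : Set ℕ) : Prop :=
  0 ∈ S ∧ (∀ a ∈ S, ∀ b ∈ S, a + b ∈ S) ∧ Sᶜ.Finite

def HasFrobenius (S : Set ℕ) (F : ℕ) : Prop :=
  F ∉ S ∧ ∀ n, F < n → n ∈ S

def IsIsolatedGap (S : Set ℕ) (h : ℕ) : Prop :=
  h ∉ S ∧ h - 1 ∈ S ∧ h + 1 ∈ S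

def IsPerfect (S : Set ℕ) : Prop := ∀ h, ¬ IsIsolatedGap S h

def Delta (F : ℕ) : Set ℕ := {0} ∪ {n | F + 1 ≤ n}

def IsSpecialGap (S : Set ℕ) (x : ℕ) : Prop :=
  x ∉ S ∧ 2 * x ∈ S ∧ ∀ s ∈ S, s ≠ 0 → x + s ∈ S

def IsMinimalGenerator (S : Set ℕ) (x : ℕ) : Prop :=
  x ∈ S ∧ x ≠ 0 ∧ ∀ a ∈ S, ∀ b ∈ S, a ≠ 0 → b ≠ 0 → x ≠ a + b

theorem stmt_3 (S T : Set ℕ) (F : ℕ)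
    (hS : IsNumericalSemigroup S) (hT : IsNumericalSemigroup T)
    (hSp : IsPerfect S) (hTp : IsPerfect T)
    (hSF : HasFrobenius S F) (hTF : HasFrobenius T F) :
    IsNumericalSemigroup (S ∩ T) ∧ IsPerfect (S ∩ T) ∧ HasFrobenius (S ∩ T) F := by
  obtain ⟨hS0, hSadd, hSfin⟩ := hS
  obtain ⟨hT0, hTadd, hTfin⟩ := hT
  refine ⟨⟨⟨hS0, hT0⟩, ?_, ?_⟩, ?_, ?_, ?_⟩
  · rintro a ⟨haS, haT⟩ b ⟨hbS, hbT⟩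
    exact ⟨hSadd a haS b hbS, hTadd a haT b hbT⟩
  · rw [Set.compl_inter]
    exact hSfin.union hTfin
  · rintro h ⟨hnot, ⟨h1S, h1T⟩, ⟨h2S, h2T⟩⟩
    rcases (by tauto : h ∉ S ∨ h ∉ T) with hh | hh
    · exact hSp h ⟨hh, h1S, h2S⟩
    · exact hTp h ⟨hh, h1T, h2T⟩
  · rintro ⟨hFS, _⟩
    exact hSF.1 hFS
  · exact fun n hn => ⟨hSF.2 n hn, hTF.2 n hn⟩
end

section
/- If S is a perfect numerical semigroup with Frobenius number F and S ≠ Δ(F) = {0} ∪ {n : n ≥ F+1}, then S \ {m(S)} is a perfect numerical semigroup with Frobenius number F, where m(S) is the multiplicity (the least positive element) of S. -/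
theorem stmt_4 (S : Set ℕ) (F m : ℕ)
    (hS : IsNumericalSemigroup S) (hSp : IsPerfect S) (hSF : HasFrobenius S F)
    (hne : S ≠ Delta F) (hm : IsLeast {s | s ∈ S ∧ s ≠ 0} m) :
    IsNumericalSemigroup (S \ {m}) ∧ IsPerfect (S \ {m}) ∧
      HasFrobenius (S \ {m}) F := by
  obtain ⟨h0, hadd, hfin⟩ := hS
  obtain ⟨⟨hmS, hm0⟩, hmin⟩ := hm
  have hmpos : 0 < m := Nat.pos_of_ne_zero hm0
  -- m ≤ F
  have hmF : m ≤ F := by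
    by_contra hlt
    push_neg at hlt
    apply hne
    ext n
    constructor
    · intro hn
      rcases eq_or_ne n 0 with rfl | hn0
      · exact Or.inl rfl
      · exact Or.inr (le_trans hlt (hmin ⟨hn, hn0⟩))
    · rintro (rfl | hn)
      · exact h0
      · exact hSF.2 n hn
  have hm1 : m ≠ 1 := by
    rintro rfl
    have : ∀ n, n ∈ S := by
      intro n
      induction n with
      | zero => exact h0
      | succ k ih => exact hadd k ih 1 hmS
    exact hSF.1 (this F)
  refine ⟨⟨⟨h0, hm0.symm⟩, ?_, ?_⟩, ?_, ?_, ?_⟩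
  · rintro a ⟨haS, ham⟩ b ⟨hbS, hbm⟩
    refine ⟨hadd a haS b hbS, ?_⟩
    simp only [Set.mem_singleton_iff] at *
    intro hab
    rcases eq_or_ne a 0 with rfl | ha0
    · exact hbm (by simpa using hab)
    rcases eq_or_ne b 0 with rfl | hb0
    · exact ham (by simpa using hab)
    have := hmin ⟨haS, ha0⟩
    have := hmin ⟨hbS, hb0⟩
    omega
  · have : (S \ {m})ᶜ = Sᶜ ∪ {m} := by
      ext x; simp [Set.mem_diff]; tauto
    rw [this]
    exact hfin.union (Set.finite_singleton m)
  · rintro h ⟨hnot, hprev, hnext⟩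
    rcases eq_or_ne h m with heq | hhm
    · subst heq
      have : h - 1 ∈ S := hprev.1
      have hne1 : h - 1 ≠ 0 → False := fun hz => by
        have := hmin ⟨this, hz⟩; omega
      have : h - 1 = 0 := by tauto
      omega
    · exact hSp h ⟨fun hh => hnot ⟨hh, hhm⟩, hprev.1, hnext.1⟩
  · exact fun hh => hSF.1 hh.1
  · intro n hn
    have : m < n := lt_of_le_of_lt hmF hn
    exact ⟨hSF.2 n hn, fun hc => by simp at hc; omega⟩
end

section
/- Let S be a perfect numerical semigroup with Frobenius number F, let x be a special gap of S with x < m(S). Then S ∪ {x} is a perfect numerical semigroup with Frobenius number F if and only if x ∉ {2, m(S)-2, F}. -/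
theorem stmt_6 (S : Set ℕ) (F m x : ℕ)
    (hS : IsNumericalSemigroup S) (hSp : IsPerfect S) (hSF : HasFrobenius S F)
    (hm : IsLeast {s | s ∈ S ∧ s ≠ 0} m)
    (hx : IsSpecialGap S x) (hxm : x < m) :
    (IsNumericalSemigroup (S ∪ {x}) ∧ IsPerfect (S ∪ {x}) ∧
      HasFrobenius (S ∪ {x}) F) ↔ x ∉ ({2, m - 2, F} : Set ℕ) := by
  obtain ⟨h0S, hadd, hfin⟩ := hS
  obtain ⟨⟨hmS, hm0⟩, hmlb⟩ := hm
  obtain ⟨hxS, h2x, hxadd⟩ := hx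
  obtain ⟨hFS, hFn⟩ := hSF
  have hx0 : x ≠ 0 := fun h => hxS (h ▸ h0S)
  have hge : ∀ s ∈ S, s ≠ 0 → m ≤ s := fun s hs h0 => hmlb ⟨hs, h0⟩
  constructor
  · rintro ⟨_, hTp, hTF⟩ hmem
    simp only [Set.mem_insert_iff, Set.mem_singleton_iff] at hmem
    rcases hmem with h2 | hm2 | hF
    · -- x = 2 : then 1 is an isolated gap of S ∪ {x}
      subst h2
      refine hTp 1 ⟨?_, ?_, ?_⟩
      · rintro (h1S | h1x)
        · exact absurd (hge 1 h1S one_ne_zero) (by omega)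
        · simp at h1x
      · exact Or.inl (by simpa using h0S)
      · exact Or.inr rfl
    · -- x = m - 2 : then x + 1 is an isolated gap of S ∪ {x}
      have hm3 : m = x + 2 := by omega
      refine hTp (x + 1) ⟨?_, ?_, ?_⟩
      · rintro (h1S | h1x)
        · exact absurd (hge (x + 1) h1S (by omega)) (by omega)
        · simp only [Set.mem_singleton_iff] at h1x; omega
      · exact Or.inr (by simp)
      · exact Or.inl (by rw [show x + 1 + 1 = m by omega]; exact hmS)
    · -- x = F : F ∈ S ∪ {x}
      exact hTF.1 (Or.inr (by simp [hF]))
  · intro hmem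
    simp only [Set.mem_insert_iff, Set.mem_singleton_iff, not_or] at hmem
    obtain ⟨hxne2, hxnem2, hxneF⟩ := hmem
    refine ⟨⟨Or.inl h0S, ?_, ?_⟩, ?_, ?_, ?_⟩
    · -- closure
      rintro a (haS | hax) b (hbS | hbx)
      · exact Or.inl (hadd a haS b hbS)
      · simp only [Set.mem_singleton_iff] at hbx; subst hbx
        rcases eq_or_ne a 0 with rfl | ha0
        · exact Or.inr (by simp)
        · exact Or.inl (by rw [add_comm]; exact hxadd a haS ha0)
      · simp only [Set.mem_singleton_iff] at hax; subst hax
        rcases eq_or_ne b 0 with rfl | hb0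
        · exact Or.inr (by simp)
        · exact Or.inl (hxadd b hbS hb0)
      · simp only [Set.mem_singleton_iff] at hax hbx
        exact Or.inl (by rw [hax, hbx, show x + x = 2 * x by ring]; exact h2x)
    · -- finite complement
      exact hfin.subset (Set.compl_subset_compl.2 Set.subset_union_left)
    · -- perfect
      rintro h ⟨hhT, hh1, hh2⟩
      simp only [Set.mem_union, Set.mem_singleton_iff, not_or] at hhT
      obtain ⟨hhS, hhx⟩ := hhT
      rcases hh1 with hh1S | hh1x
      · rcases hh2 with hh2S | hh2x
        · exact hSp h ⟨hhS, hh1S, hh2S⟩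
        · -- h + 1 = x
          simp only [Set.mem_singleton_iff] at hh2x
          have hx1 : x ≥ 1 := by omega
          rcases eq_or_ne x 1 with rfl | hxne1
          · exact hhS (by rw [show h = 0 by omega]; exact h0S)
          · have hx3 : x ≥ 3 := by omega
            have : h - 1 = x - 2 := by omega
            rw [this] at hh1S
            have := hge (x - 2) hh1S (by omega)
            omega
      · -- h - 1 = x
        simp only [Set.mem_singleton_iff] at hh1x
        have hh : h = x + 1 := by omega
        subst hh
        rcases hh2 with hh2S | hh2x
        · have := hge (x + 1 + 1) hh2S (by omega)
          have hmx1 : m = x + 1 := by omega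
          exact hhS (hmx1 ▸ hmS)
        · simp only [Set.mem_singleton_iff] at hh2x; omega
    · -- F ∉ S ∪ {x}
      rintro (hF | hF)
      · exact hFS hF
      · exact hxneF (by simpa using hF.symm)
    · exact fun n hn => Or.inl (hFn n hn)
end

section
/- If S is a numerical semigroup that is not perfect, and h(S) denotes its largest isolated gap, then S ∪ {h(S)} is a numerical semigroup. -/
theorem stmt_7 (S : Set ℕ) (h : ℕ)
    (hS : IsNumericalSemigroup S) (hnp : ¬ IsPerfect S)
    (hh : IsGreatest {g | IsIsolatedGap S g} h) :
    IsNumericalSemigroup (S ∪ {h}) := by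
  obtain ⟨h0, hadd, hfin⟩ := hS
  obtain ⟨⟨hnS, hm1, hp1⟩, hmax⟩ := hh
  have hpos : 1 ≤ h := by
    rcases Nat.eq_zero_or_pos h with rfl | hp
    · exact absurd h0 hnS
    · exact hp
  -- key: for s ∈ S, s ≠ 0, h + s ∈ S
  have key : ∀ s ∈ S, s ≠ 0 → h + s ∈ S := by
    intro s hs hs0
    by_contra hns
    have : IsIsolatedGap S (h + s) := by
      refine ⟨hns, ?_, ?_⟩
      · have : h + s - 1 = (h - 1) + s := by omega
        rw [this]; exact hadd _ hm1 _ hs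
      · have : h + s + 1 = (h + 1) + s := by ring
        rw [this]; exact hadd _ hp1 _ hs
    have := hmax this
    omega
  refine ⟨Or.inl h0, ?_, ?_⟩
  · rintro a (ha | ha) b (hb | hb)
    · exact Or.inl (hadd _ ha _ hb)
    · rcases Nat.eq_zero_or_pos a with rfl | hap
      · rw [zero_add]; exact Or.inr hb
      · have hb' : b = h := hb
        rw [hb', add_comm]
        exact Or.inl (key a ha (by omega))
    · have ha' : a = h := ha
      rw [ha']
      rcases Nat.eq_zero_or_pos b with rfl | hbp
      · exact Or.inr rfl
      · exact Or.inl (key b hb (by omega))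
    · have ha' : a = h := ha
      have hb' : b = h := hb
      rw [ha', hb']
      have : h + h = (h - 1) + (h + 1) := by omega
      exact Or.inl (this ▸ hadd _ hm1 _ hp1)
  · exact hfin.subset (by intro x hx; simp only [Set.mem_compl_iff, Set.mem_union] at hx ⊢; tauto)
end

section
/- If S is a numerical semigroup with Frobenius number F such that F-1 ∉ S, then there exists a perfect numerical semigroup T with Frobenius number F such that S ⊆ T. -/
theorem stmt_8 (S : Set ℕ) (F : ℕ)
    (hS : IsNumericalSemigroup S) (hSF : HasFrobenius S F) (hF1 : F - 1 ∉ S) :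
    ∃ T : Set ℕ, IsNumericalSemigroup T ∧ IsPerfect T ∧ HasFrobenius T F ∧
      S ⊆ T := by
  obtain ⟨h0, hadd, hfin⟩ := hS
  obtain ⟨hFnot, hFmem⟩ := hSF
  refine ⟨S ∪ {h | IsIsolatedGap S h}, ?_, ?_, ?_, Set.subset_union_left⟩
  · -- numerical semigroup
    have key : ∀ x, IsIsolatedGap S x → ∀ y ∈ S, x + y ∈ S ∪ {h | IsIsolatedGap S h} := by
      intro x hx y hy
      obtain ⟨hx1, hx2, hx3⟩ := hx
      have hxpos : 1 ≤ x := by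
        rcases Nat.eq_zero_or_pos x with rfl | h
        · exact absurd h0 hx1
        · exact h
      by_cases hmem : x + y ∈ S
      · exact Or.inl hmem
      · refine Or.inr ⟨hmem, ?_, ?_⟩
        · have h1 : x - 1 + y ∈ S := hadd _ hx2 _ hy
          have heq : x + y - 1 = x - 1 + y := by omega
          rwa [heq]
        · have h1 : x + 1 + y ∈ S := hadd _ hx3 _ hy
          have heq : x + y + 1 = x + 1 + y := by ring
          rwa [heq]
    refine ⟨Or.inl h0, ?_, ?_⟩
    · rintro a (ha | ha) b (hb | hb)
      · exact Or.inl (hadd _ ha _ hb)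
      · rw [Nat.add_comm]; exact key _ hb _ ha
      · exact key _ ha _ hb
      · -- both isolated gaps : (a-1)+(b+1) ∈ S
        obtain ⟨ha1, ha2, ha3⟩ := ha
        obtain ⟨hb1, hb2, hb3⟩ := hb
        have hapos : 1 ≤ a := by
          rcases Nat.eq_zero_or_pos a with rfl | h
          · exact absurd h0 ha1
          · exact h
        have h1 : a - 1 + (b + 1) ∈ S := hadd _ ha2 _ hb3
        have heq : a + b = a - 1 + (b + 1) := by omega
        exact Or.inl (heq ▸ h1)
    · exact hfin.subset (by
        intro x hx
        simp only [Set.mem_compl_iff, Set.mem_union] at hx ⊢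
        exact fun h => hx (Or.inl h))
  · -- perfect
    rintro h ⟨hnot, hm1, hp1⟩
    have hhS : h ∉ S := fun hh => hnot (Or.inl hh)
    have hpos : 1 ≤ h := by
      rcases Nat.eq_zero_or_pos h with rfl | hp
      · exact absurd h0 hhS
      · exact hp
    have hm1S : h - 1 ∈ S := by
      rcases hm1 with hm | hm
      · exact hm
      · exfalso
        have : h - 1 + 1 ∈ S := hm.2.2
        have heq : h - 1 + 1 = h := by omega
        exact hhS (heq ▸ this)
    have hp1S : h + 1 ∈ S := by
      rcases hp1 with hm | hm
      · exact hm
      · exfalso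
        have : h + 1 - 1 ∈ S := hm.2.1
        have heq : h + 1 - 1 = h := by omega
        exact hhS (heq ▸ this)
    exact hnot (Or.inr ⟨hhS, hm1S, hp1S⟩)
  · -- Frobenius
    constructor
    · rintro (hF | hF)
      · exact hFnot hF
      · exact hF1 hF.2.1
    · intro n hn
      exact Or.inl (hFmem n hn)
end

section
/- A numerical semigroup S is a maximal element (under inclusion) of the set of perfect numerical semigroups with Frobenius number F if and only if S is maximal in the set of all numerical semigroups T with T ∩ {F-1, F} = ∅. -/
/-!
A perfect semigroup with Frobenius number `F` contains `F + 1` but not `F`, so it cannot contain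
`F - 1` either: perfect semigroups with Frobenius number `F` avoid `{F - 1, F}`. Conversely, a
semigroup `S` maximal among those avoiding `{F - 1, F}` has Frobenius number `F`, since
`S ∪ (F, ∞)` still avoids them, and is perfect, since for an isolated gap `h` the semigroup
`S ∪ (h + S)` still avoids them (`(h - 1) + s` and `(h + 1) + s` lie in `S`). As a numerical
semigroup has only finitely many oversemigroups, every avoiding semigroup lies below a maximal
one, and the two families therefore have the same maximal elements.
-/

namespace IsNumericalSemigroup

variable {S T : Set ℕ}

lemma finite_setOf_superset (hS : IsNumericalSemigroup S) : {T | S ⊆ T}.Finite := by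
  refine (hS.2.2.finite_subsets.image (S ∪ ·)).subset fun T hST => ?_
  exact ⟨T \ S, fun _ hx => hx.2, Set.union_sdiff_cancel hST⟩

lemma exists_le_maximal (hS : IsNumericalSemigroup S) {P : Set ℕ → Prop} (hPS : P S) :
    ∃ T, S ⊆ T ∧ Maximal P T := by
  obtain ⟨T, hST, hT⟩ := (hS.finite_setOf_superset.subset
    (Set.sep_subset _ P)).exists_le_maximal ⟨Set.Subset.rfl, hPS⟩
  exact ⟨T, hST, hT.1.2, fun U hU hTU => hT.2 ⟨hST.trans hTU, hU⟩ hTU⟩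

lemma of_superset (hS : IsNumericalSemigroup S) (hST : S ⊆ T)
    (hadd : ∀ a ∈ T, ∀ b ∈ T, a + b ∈ T) : IsNumericalSemigroup T :=
  ⟨hST hS.1, hadd, hS.2.2.subset (Set.compl_subset_compl.2 hST)⟩

lemma union_Ioi (hS : IsNumericalSemigroup S) (n : ℕ) : IsNumericalSemigroup (S ∪ Set.Ioi n) := by
  refine hS.of_superset Set.subset_union_left ?_
  rintro a (ha | ha) b (hb | hb)
  · exact Or.inl (hS.2.1 a ha b hb)
  all_goals exact Or.inr (by simp only [Set.mem_Ioi] at *; omega)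

lemma union_image_add (hS : IsNumericalSemigroup S) {h : ℕ} (hh : h + h ∈ S) :
    IsNumericalSemigroup (S ∪ (h + ·) '' S) := by
  refine hS.of_superset Set.subset_union_left ?_
  rintro a (ha | ⟨s, hs, rfl⟩) b (hb | ⟨t, ht, rfl⟩)
  · exact Or.inl (hS.2.1 a ha b hb)
  · exact Or.inr ⟨a + t, hS.2.1 a ha t ht, by ring⟩
  · exact Or.inr ⟨s + b, hS.2.1 s hs b hb, by ring⟩
  · exact Or.inl (by simpa only [add_add_add_comm] using hS.2.1 _ hh _ (hS.2.1 s hs t ht))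

end IsNumericalSemigroup

def IsPerfectWithFrobenius (F : ℕ) (S : Set ℕ) : Prop :=
  IsNumericalSemigroup S ∧ IsPerfect S ∧ HasFrobenius S F

def IsNumericalSemigroupAvoiding (F : ℕ) (S : Set ℕ) : Prop :=
  IsNumericalSemigroup S ∧ F - 1 ∉ S ∧ F ∉ S

variable {S : Set ℕ} {F : ℕ}

lemma IsPerfect.pred_notMem (hP : IsPerfect S) (hF : HasFrobenius S F) : F - 1 ∉ S :=
  fun hF₁ => hP F ⟨hF.1, hF₁, hF.2 _ (Nat.lt_succ_self F)⟩

lemma IsPerfectWithFrobenius.isNumericalSemigroupAvoiding (h : IsPerfectWithFrobenius F S) :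
    IsNumericalSemigroupAvoiding F S :=
  ⟨h.1, h.2.1.pred_notMem h.2.2, h.2.2.1⟩

lemma HasFrobenius.of_maximal (hS : Maximal (IsNumericalSemigroupAvoiding F) S) :
    HasFrobenius S F := by
  obtain ⟨hns, hF₁, hF⟩ := hS.prop
  have hT : IsNumericalSemigroupAvoiding F (S ∪ Set.Ioi F) :=
    ⟨hns.union_Ioi F, by simp [hF₁], by simp [hF]⟩
  exact ⟨hF, fun n hn => hS.le_of_ge hT Set.subset_union_left (Or.inr hn)⟩

lemma IsPerfect.of_maximal (hS : Maximal (IsNumericalSemigroupAvoiding F) S) : IsPerfect S := by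
  obtain ⟨hns, hF₁, hF⟩ := hS.prop
  rintro h ⟨hh, hh₁, hh₂⟩
  have h0 : 0 < h := Nat.pos_of_ne_zero fun h0 => hh (h0 ▸ hns.1)
  have hT : IsNumericalSemigroupAvoiding F (S ∪ (h + ·) '' S) := by
    refine ⟨hns.union_image_add ?_, ?_, ?_⟩
    · simpa only [show h - 1 + (h + 1) = h + h by omega] using hns.2.1 _ hh₁ _ hh₂
    · rintro (hx | ⟨s, hs, hsx : h + s = F - 1⟩)
      · exact hF₁ hx
      · exact hF (by simpa only [show h + 1 + s = F by omega] using hns.2.1 _ hh₂ _ hs)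
    · rintro (hx | ⟨s, hs, hsx : h + s = F⟩)
      · exact hF hx
      · exact hF₁ (by simpa only [show h - 1 + s = F - 1 by omega] using hns.2.1 _ hh₁ _ hs)
  exact hh (hS.le_of_ge hT Set.subset_union_left (Or.inr ⟨0, hns.1, add_zero h⟩))

lemma maximal_isPerfectWithFrobenius_iff :
    Maximal (IsPerfectWithFrobenius F) S ↔ Maximal (IsNumericalSemigroupAvoiding F) S := by
  refine (maximal_iff_maximal_of_imp_of_forall
    (fun _ h => IsPerfectWithFrobenius.isNumericalSemigroupAvoiding h) fun T hT => ?_).symm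
  obtain ⟨U, hTU, hU⟩ := hT.1.exists_le_maximal hT
  exact ⟨U, hTU, hU.prop.1, IsPerfect.of_maximal hU, HasFrobenius.of_maximal hU⟩

theorem stmt_9_general (S : Set ℕ) (F : ℕ) (hS : IsNumericalSemigroup S) :
    (IsPerfect S ∧ HasFrobenius S F ∧
      ∀ T : Set ℕ, IsNumericalSemigroup T → IsPerfect T → HasFrobenius T F →
        S ⊆ T → T = S) ↔
    (S ∩ {F - 1, F} = ∅ ∧
      ∀ T : Set ℕ, IsNumericalSemigroup T → T ∩ {F - 1, F} = ∅ →
        S ⊆ T → T = S) := by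
  have avoids_iff (T : Set ℕ) : T ∩ {F - 1, F} = ∅ ↔ F - 1 ∉ T ∧ F ∉ T := by
    simp only [← Set.disjoint_iff_inter_eq_empty, Set.disjoint_insert_right,
      Set.disjoint_singleton_right]
  have h := maximal_isPerfectWithFrobenius_iff (S := S) (F := F)
  simp only [maximal_subset_iff, IsPerfectWithFrobenius, IsNumericalSemigroupAvoiding, hS,
    true_and, @eq_comm _ S] at h
  simpa only [avoids_iff, and_imp, and_assoc] using h

theorem stmt_9 (S : Set ℕ) (F : ℕ) (hF : 2 ≤ F) (hS : IsNumericalSemigroup S) :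
    (IsPerfect S ∧ HasFrobenius S F ∧
      ∀ T : Set ℕ, IsNumericalSemigroup T → IsPerfect T → HasFrobenius T F →
        S ⊆ T → T = S) ↔
    (S ∩ {F - 1, F} = ∅ ∧
      ∀ T : Set ℕ, IsNumericalSemigroup T → T ∩ {F - 1, F} = ∅ →
        S ⊆ T → T = S) :=
  stmt_9_general S F hS
end

section
/- If S and T are numerical semigroups with S ⊊ T, then max(T\S) is a special gap of S. -/
theorem stmt_10 (S T : Set ℕ) (x : ℕ)
    (hS : IsNumericalSemigroup S) (hT : IsNumericalSemigroup T)
    (hST : S ⊂ T) (hx : IsGreatest (T \ S) x) :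
    IsSpecialGap S x := by
  obtain ⟨⟨hxT, hxS⟩, hub⟩ := hx
  have hsub : S ⊆ T := hST.1
  have hxpos : x ≠ 0 := fun h => hxS (h ▸ hS.1)
  refine ⟨hxS, ?_, ?_⟩
  · have h2T : 2 * x ∈ T := by
      have := hT.2.1 x hxT x hxT
      simpa [two_mul] using this
    by_contra h2S
    have := hub ⟨h2T, h2S⟩
    omega
  · intro s hs hs0
    have hxsT : x + s ∈ T := hT.2.1 x hxT s (hsub hs)
    by_contra hns
    have := hub ⟨hxsT, hns⟩
    omega
end

section
/- Let S be a perfect numerical semigroup with Frobenius number F, and let R(S) be the union of {x ∈ msg(S) : x < F and not both x-1 ∈ S and x+1 ∈ S} and {x ∈ msg(S) : x-1 ∈ S, x+1 ∈ S, x+1 ∈ msg(S), and x+1 < F}, where msg(S) is the minimal system of generators of S. Then every perfect numerical semigroup with Frobenius number F containing R(S) contains S; i.e., S is the least element of P(F) containing R(S). -/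
theorem stmt_12 (S : Set ℕ) (F : ℕ)
    (hS : IsNumericalSemigroup S) (hSp : IsPerfect S) (hSF : HasFrobenius S F)
    (R : Set ℕ)
    (hR : R = {x | IsMinimalGenerator S x ∧ x < F ∧ ¬(x - 1 ∈ S ∧ x + 1 ∈ S)} ∪
          {x | IsMinimalGenerator S x ∧ x - 1 ∈ S ∧ x + 1 ∈ S ∧
               IsMinimalGenerator S (x + 1) ∧ x + 1 < F}) :
    IsLeast {T : Set ℕ | IsNumericalSemigroup T ∧ IsPerfect T ∧
      HasFrobenius T F ∧ R ⊆ T} S := by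
  subst hR
  constructor
  · refine ⟨hS, hSp, hSF, ?_⟩
    rintro x (⟨hx, -⟩ | ⟨hx, -⟩) <;> exact hx.1
  · rintro T ⟨hT, hTp, hTF, hRT⟩ n hn
    induction n using Nat.strong_induction_on with
    | _ n ih =>
    by_cases h0 : n = 0
    · subst h0; exact hT.1
    by_cases hFlt : F < n
    · exact hTF.2 n hFlt
    push_neg at hFlt
    have hnF : n < F := lt_of_le_of_ne hFlt (fun h => hSF.1 (h ▸ hn))
    by_cases hmg : IsMinimalGenerator S n
    · by_cases hside : n - 1 ∈ S ∧ n + 1 ∈ S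
      · by_cases hmg1 : IsMinimalGenerator S (n + 1)
        · have hn1F : n + 1 < F :=
            lt_of_le_of_ne hnF (fun h => hSF.1 (by rw [← h]; exact hside.2))
          exact hRT (Or.inr ⟨hmg, hside.1, hside.2, hmg1, hn1F⟩)
        · have hdec : ∃ a ∈ S, ∃ b ∈ S, a ≠ 0 ∧ b ≠ 0 ∧ n + 1 = a + b := by
            by_contra hc
            push_neg at hc
            exact hmg1 ⟨hside.2, by omega,
              fun a ha b hb ha0 hb0 => hc a ha b hb ha0 hb0⟩
          obtain ⟨a, ha, b, hb, ha0, hb0, hab⟩ := hdec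
          have hallS : ∀ k : ℕ, 1 ∈ S → k + 1 ∈ S := by
            intro k h1
            induction k with
            | zero => exact h1
            | succ k ihk => exact hS.2.1 (k + 1) ihk 1 h1
          have hone : 1 ∉ S := by
            intro h1
            have : (F - 1) + 1 ∈ S := hallS (F - 1) h1
            have hF1 : (F - 1) + 1 = F := by omega
            exact hSF.1 (hF1 ▸ this)
          have ha1 : a ≠ 1 := fun h => hone (h ▸ ha)
          have hb1 : b ≠ 1 := fun h => hone (h ▸ hb)
          have h1T : n + 1 ∈ T := by
            rw [hab]
            exact hT.2.1 a (ih a (by omega) ha) b (ih b (by omega) hb)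
          have hm1T : n - 1 ∈ T := by
            rcases Nat.eq_or_lt_of_le (Nat.one_le_iff_ne_zero.mpr h0) with h1 | h1
            · simpa [← h1] using hT.1
            · exact ih (n - 1) (by omega) hside.1
          by_contra hnT
          exact hTp n ⟨hnT, hm1T, h1T⟩
      · exact hRT (Or.inl ⟨hmg, hnF, hside⟩)
    · have hdec : ∃ a ∈ S, ∃ b ∈ S, a ≠ 0 ∧ b ≠ 0 ∧ n = a + b := by
        by_contra hc
        push_neg at hc
        exact hmg ⟨hn, h0, fun a ha b hb ha0 hb0 => hc a ha b hb ha0 hb0⟩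
      obtain ⟨a, ha, b, hb, ha0, hb0, hab⟩ := hdec
      have hA : a < n := by omega
      have hB : b < n := by omega
      rw [hab]
      exact hT.2.1 a (ih a hA ha) b (ih b hB hb)
end

section
/- Let m and F be positive integers with m < F, m ∤ F and m ∤ (F-1). Then S = ⟨m⟩ ∪ {F+1, F+2, ...} is a perfect numerical semigroup with Frobenius number F, and S is the smallest perfect numerical semigroup with Frobenius number F containing m. -/
theorem stmt_14 (m F : ℕ) (hm : 0 < m) (hmF : m < F)
    (h1 : ¬ m ∣ F) (h2 : ¬ m ∣ (F - 1)) :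
    IsNumericalSemigroup ({n | m ∣ n} ∪ {n | F + 1 ≤ n}) ∧
    IsPerfect ({n | m ∣ n} ∪ {n | F + 1 ≤ n}) ∧
    HasFrobenius ({n | m ∣ n} ∪ {n | F + 1 ≤ n}) F ∧
    IsLeast {T : Set ℕ | IsNumericalSemigroup T ∧ IsPerfect T ∧
      HasFrobenius T F ∧ m ∈ T} ({n | m ∣ n} ∪ {n | F + 1 ≤ n}) := by
  have hm1 : m ≠ 1 := by rintro rfl; exact h1 (one_dvd F)
  have hm2' : m ≠ 2 := by
    rintro rfl
    rcases Nat.even_or_odd F with he | ho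
    · exact h1 he.two_dvd
    · exact h2 (Nat.Odd.sub_odd ho odd_one).two_dvd
  have hNS : IsNumericalSemigroup ({n | m ∣ n} ∪ {n | F + 1 ≤ n}) := by
    refine ⟨Or.inl (dvd_zero m), ?_, ?_⟩
    · rintro a (ha | ha) b (hb | hb)
      · exact Or.inl (dvd_add ha hb)
      · exact Or.inr (by simp only [Set.mem_setOf_eq] at hb ⊢; omega)
      · exact Or.inr (by simp only [Set.mem_setOf_eq] at ha ⊢; omega)
      · exact Or.inr (by simp only [Set.mem_setOf_eq] at ha ⊢; omega)
    · apply Set.Finite.subset (Set.finite_Iio (F+1))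
      intro n hn
      simp only [Set.mem_compl_iff, Set.mem_union, Set.mem_setOf_eq, not_or, not_le] at hn
      exact hn.2
  have hP : IsPerfect ({n | m ∣ n} ∪ {n | F + 1 ≤ n}) := by
    rintro h ⟨hh, hh1, hh2⟩
    simp only [Set.mem_union, Set.mem_setOf_eq, not_or, not_le] at hh hh1 hh2
    have h0 : h ≠ 0 := by rintro rfl; exact hh.1 (dvd_zero m)
    rcases hh2 with hd | hge
    · rcases hh1 with hd' | hge'
      · have hdvd2 : m ∣ 2 := by
          have := Nat.dvd_sub hd hd'
          have e : h + 1 - (h - 1) = 2 := by omega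
          rwa [e] at this
        have := Nat.le_of_dvd (by norm_num) hdvd2
        interval_cases m
        · exact hm1 rfl
        · exact hm2' rfl
      · omega
    · rcases hh1 with hd' | hge'
      · have : h = F := by omega
        subst this
        exact h2 hd'
      · omega
  have hF : HasFrobenius ({n | m ∣ n} ∪ {n | F + 1 ≤ n}) F := by
    constructor
    · simp only [Set.mem_union, Set.mem_setOf_eq, not_or, not_le]
      exact ⟨h1, by omega⟩
    · intro n hn; exact Or.inr (by simpa using hn)
  refine ⟨hNS, hP, hF, ⟨⟨hNS, hP, hF, Or.inl (dvd_refl m)⟩, ?_⟩⟩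
  rintro T ⟨⟨hT0, hTadd, _⟩, _, ⟨hTF, hTgt⟩, hTm⟩ n (hn | hn)
  · obtain ⟨k, rfl⟩ := hn
    induction k with
    | zero => simpa using hT0
    | succ k ih =>
      have := hTadd _ ih m hTm
      simpa [Nat.mul_succ] using this
  · exact hTgt n hn
end

section
/- If S is a numerical semigroup that is not perfect, then there exists a perfect numerical semigroup P(S) (the perfect closure) which is the least perfect numerical semigroup containing S; moreover, the number of elements of P(S)\S equals the number of isolated gaps of S. -/
theorem stmt_15 (S : Set ℕ)
    (hS : IsNumericalSemigroup S) (hnp : ¬ IsPerfect S) :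
    ∃ P : Set ℕ,
      IsLeast {T : Set ℕ | IsNumericalSemigroup T ∧ IsPerfect T ∧ S ⊆ T} P ∧
      (P \ S).ncard = {h | IsIsolatedGap S h}.ncard := by
  obtain ⟨h0, hadd, hfin⟩ := hS
  have hpos : ∀ h, IsIsolatedGap S h → 1 ≤ h := by
    intro h hh
    rcases Nat.eq_zero_or_pos h with rfl | hp
    · exact absurd h0 hh.1
    · exact hp
  have key : ∀ h, IsIsolatedGap S h → ∀ s ∈ S, 1 ≤ s →
      (h + s ∈ S ∨ IsIsolatedGap S (h + s)) := by
    intro h hh s hs hs1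
    by_cases hmem : h + s ∈ S
    · exact Or.inl hmem
    · refine Or.inr ⟨hmem, ?_, ?_⟩
      · have hm : h - 1 + s ∈ S := hadd _ hh.2.1 _ hs
        have h1 := hpos h hh
        have he : h + s - 1 = h - 1 + s := by omega
        rw [he]; exact hm
      · have he : h + s + 1 = h + 1 + s := by omega
        rw [he]; exact hadd _ hh.2.2 _ hs
  set P := S ∪ {h | IsIsolatedGap S h} with hP
  have hclosed : ∀ a ∈ P, ∀ b ∈ P, a + b ∈ P := by
    intro a ha b hb
    rcases ha with ha | ha
    · rcases hb with hb | hb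
      · exact Or.inl (hadd _ ha _ hb)
      · rcases Nat.eq_zero_or_pos a with rfl | hap
        · exact Or.inr (by simpa using hb)
        · rcases key b hb a ha hap with h | h
          · exact Or.inl (by rwa [Nat.add_comm] at h)
          · exact Or.inr (by rw [Nat.add_comm]; exact h)
    · rcases hb with hb | hb
      · rcases Nat.eq_zero_or_pos b with rfl | hbp
        · exact Or.inr ha
        · rcases key a ha b hb hbp with h | h
          · exact Or.inl h
          · exact Or.inr h
      · have he : a + b = (a - 1) + (b + 1) := by
          have := hpos a ha; omega
        rw [he]
        exact Or.inl (hadd _ ha.2.1 _ hb.2.2)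
  have hperf : IsPerfect P := by
    intro h hh
    obtain ⟨hn, hm1, hp1⟩ := hh
    have hnS : h ∉ S := fun hc => hn (Or.inl hc)
    have hnI : ¬ IsIsolatedGap S h := fun hc => hn (Or.inr hc)
    have hm1S : h - 1 ∈ S := by
      rcases hm1 with h1 | h1
      · exact h1
      · exfalso
        rcases Nat.eq_zero_or_pos h with rfl | hp
        · exact hnS h0
        · have he : h - 1 + 1 = h := by omega
          exact hnS (he ▸ h1.2.2)
    have hp1S : h + 1 ∈ S := by
      rcases hp1 with h1 | h1
      · exact h1
      · exfalso
        have he : h + 1 - 1 = h := by omega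
        exact hnS (he ▸ h1.2.1)
    exact hnI ⟨hnS, hm1S, hp1S⟩
  refine ⟨P, ⟨⟨⟨Or.inl h0, hclosed, ?_⟩, hperf, Set.subset_union_left⟩, ?_⟩, ?_⟩
  · refine hfin.subset ?_
    intro x hx
    simp only [Set.mem_compl_iff] at *
    exact fun hc => hx (Or.inl hc)
  · rintro T ⟨_, hTperf, hST⟩
    intro x hx
    rcases hx with hx | hx
    · exact hST hx
    · by_contra hc
      exact hTperf x ⟨hc, hST hx.2.1, hST hx.2.2⟩
  · congr 1
    ext x
    simp only [Set.mem_diff, Set.mem_union, Set.mem_setOf_eq, hP]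
    constructor
    · rintro ⟨hx | hx, hns⟩
      · exact absurd hx hns
      · exact hx
    · intro hx
      exact ⟨Or.inr hx, hx.1⟩
end

section
/- Every saturated numerical semigroup is an Arf numerical semigroup. -/
open Classical in
/-- The paper's `d_S(a)`; the empty gcd gives `gcdUpTo S 0 = 0`. -/
noncomputable def gcdUpTo (S : Set ℕ) (a : ℕ) : ℕ :=
  ((Finset.Icc 1 a).filter (· ∈ S)).gcd id

def IsSaturated (S : Set ℕ) : Prop :=
  ∀ s ∈ S, s ≠ 0 → s + gcdUpTo S s ∈ S

def IsArf (S : Set ℕ) : Prop :=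
  ∀ x ∈ S, ∀ y ∈ S, ∀ z ∈ S, z ≤ y → y ≤ x → x + y - z ∈ S

section gcdUpTo

variable {S : Set ℕ} {a x y : ℕ}

theorem gcdUpTo_dvd (hx : x ∈ S) (hx0 : 0 < x) (hxa : x ≤ a) : gcdUpTo S a ∣ x := by
  classical
  exact Finset.gcd_dvd (f := id) (by simp [hx, hxa, Nat.one_le_iff_ne_zero.mpr hx0.ne'])

theorem dvd_gcdUpTo {c : ℕ} (h : ∀ x ∈ S, 0 < x → x ≤ a → c ∣ x) : c ∣ gcdUpTo S a := by
  classical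
  refine Finset.dvd_gcd fun x hx => ?_
  simp only [Finset.mem_filter, Finset.mem_Icc] at hx
  exact h x hx.2 hx.1.1 hx.1.2

theorem gcdUpTo_dvd_gcdUpTo {b : ℕ} (hab : a ≤ b) : gcdUpTo S b ∣ gcdUpTo S a :=
  dvd_gcdUpTo fun _ hx hx0 hxa => gcdUpTo_dvd hx hx0 (hxa.trans hab)

theorem gcdUpTo_dvd_sub (hx : x ∈ S) (hy : y ∈ S) (hy0 : 0 < y) (hyx : y ≤ x) (hxa : x ≤ a) :
    gcdUpTo S a ∣ x - y :=
  Nat.dvd_sub (gcdUpTo_dvd hx (hy0.trans_le hyx) hxa) (gcdUpTo_dvd hy hy0 (hyx.trans hxa))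

end gcdUpTo

namespace IsSaturated

variable {S : Set ℕ} (hS : IsSaturated S) {a : ℕ} (ha0 : 0 < a)
include hS ha0

theorem add_gcdUpTo_mem {s : ℕ} (hs : s ∈ S) (has : a ≤ s) : s + gcdUpTo S a ∈ S := by
  set D := gcdUpTo S a
  suffices h : ∀ n, ∀ t ∈ S, s ≤ t → t ≤ s + D → s + D - t = n → s + D ∈ S from
    h _ s hs le_rfl (Nat.le_add_right s D) rfl
  intro n
  induction n using Nat.strong_induction_on with
  | _ n ih =>
    intro t ht hst htD hn
    rcases htD.eq_or_lt with rfl | hlt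
    · exact ht
    have ht0 : 0 < t := ha0.trans_le (has.trans hst)
    have hstep : gcdUpTo S t ∣ s + D - t := by
      rw [show s + D - t = D - (t - s) by omega]
      exact Nat.dvd_sub (gcdUpTo_dvd_gcdUpTo (has.trans hst))
        (gcdUpTo_dvd_sub ht hs (ha0.trans_le has) hst le_rfl)
    have hpos : 0 < gcdUpTo S t := Nat.pos_of_dvd_of_pos (gcdUpTo_dvd ht ht0 le_rfl) ht0
    have hle : gcdUpTo S t ≤ s + D - t := Nat.le_of_dvd (by omega) hstep
    exact ih _ (by omega) _ (hS t ht ht0.ne') (by omega) (by omega) rfl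

theorem add_mul_gcdUpTo_mem {x : ℕ} (hx : x ∈ S) (hax : a ≤ x) (k : ℕ) :
    x + k * gcdUpTo S a ∈ S := by
  induction k with
  | zero => simpa using hx
  | succ k ih =>
    rw [add_one_mul, ← add_assoc]
    exact hS.add_gcdUpTo_mem ha0 ih (hax.trans (Nat.le_add_right x _))

omit ha0 in
theorem isArf (hadd : ∀ a ∈ S, ∀ b ∈ S, a + b ∈ S) : IsArf S := by
  intro x hx y hy z hz hzy hyx
  rcases Nat.eq_zero_or_pos z with rfl | hz0
  · simpa using hadd x hx y hy
  obtain ⟨k, hk⟩ := gcdUpTo_dvd_sub hy hz hz0 hzy le_rfl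
  rw [show x + y - z = x + (y - z) by omega, hk, mul_comm]
  exact hS.add_mul_gcdUpTo_mem (hz0.trans_le hzy) hx hyx k

end IsSaturated

theorem stmt_16 (S : Set ℕ) (hS : IsNumericalSemigroup S)
    (hsat : ∀ s ∈ S, s ≠ 0 → ∀ d : ℕ,
      ((∀ x ∈ S, 0 < x → x ≤ s → d ∣ x) ∧
        (∀ c : ℕ, (∀ x ∈ S, 0 < x → x ≤ s → c ∣ x) → c ∣ d)) →
      s + d ∈ S) :
    ∀ x ∈ S, ∀ y ∈ S, ∀ z ∈ S, z ≤ y → y ≤ x → x + y - z ∈ S := by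
  have hsat' : IsSaturated S := fun s hs hs0 =>
    hsat s hs hs0 _ ⟨fun _ hx hx0 hxs => gcdUpTo_dvd hx hx0 hxs, fun _ => dvd_gcdUpTo⟩
  exact hsat'.isArf hS.2.1
end

section
/- Let m, r, F be positive integers with m < r < F, m ∤ r, and ⟨m,r⟩ ∩ {F-1, F} = ∅. Then the perfect closure P(⟨m,r⟩ ∪ {F+1, F+2,...}) is the smallest perfect numerical semigroup with Frobenius number F containing {m, r}. -/
def gapSet (T : Set ℕ) : Set ℕ := {x | IsIsolatedGap T x}

open Classical in
noncomputable def stepP (T : Set ℕ) : Set ℕ :=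
  if (gapSet T).Nonempty then insert (sSup (gapSet T)) T else T

lemma stepP_of_nonempty {T : Set ℕ} (hne : (gapSet T).Nonempty) :
    stepP T = insert (sSup (gapSet T)) T := by
  rw [stepP, if_pos hne]

lemma stepP_of_empty {T : Set ℕ} (hne : ¬ (gapSet T).Nonempty) :
    stepP T = T := by
  rw [stepP, if_neg hne]

lemma compl_insert' (a : ℕ) (T : Set ℕ) : (insert a T)ᶜ = Tᶜ \ {a} := by
  ext x
  simp only [Set.mem_compl_iff, Set.mem_insert_iff, Set.mem_diff, Set.mem_singleton_iff]
  tauto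

lemma stepP_spec {F : ℕ} (hF : 1 ≤ F) {T : Set ℕ}
    (h0 : IsNumericalSemigroup T) (htail : ∀ n, F < n → n ∈ T)
    (h1 : F - 1 ∉ T) (h2 : F ∉ T) :
    IsNumericalSemigroup (stepP T) ∧ (∀ n, F < n → n ∈ stepP T) ∧
      F - 1 ∉ stepP T ∧ F ∉ stepP T ∧ T ⊆ stepP T := by
  by_cases hne : (gapSet T).Nonempty
  · have hbdd : BddAbove (gapSet T) := by
      refine ⟨F, fun x hx => ?_⟩
      by_contra hxF
      exact hx.1 (htail x (by omega))
    have hmem : sSup (gapSet T) ∈ gapSet T := Nat.sSup_mem hne hbdd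
    set h := sSup (gapSet T) with hh
    have hT : h ∉ T := hmem.1
    have hTm : h - 1 ∈ T := hmem.2.1
    have hTp : h + 1 ∈ T := hmem.2.2
    have hpos : 1 ≤ h := by
      rcases Nat.eq_zero_or_pos h with h0' | h0'
      · exact absurd (h0' ▸ h0.1) hT
      · exact h0'
    have hne1 : h ≠ F := by
      intro he; exact h1 (he ▸ hTm)
    have hne2 : h ≠ F - 1 := by
      intro he
      have : h + 1 = F := by omega
      exact h2 (this ▸ hTp)
    have hadd : ∀ s ∈ T, s ≠ 0 → h + s ∈ T := by
      intro s hs hs0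
      by_contra hns
      have hgap : h + s ∈ gapSet T := by
        refine ⟨hns, ?_, ?_⟩
        · have : h - 1 + s ∈ T := h0.2.1 _ hTm _ hs
          have he : h + s - 1 = h - 1 + s := by omega
          rw [he]; exact this
        · have : h + 1 + s ∈ T := h0.2.1 _ hTp _ hs
          have he : h + s + 1 = h + 1 + s := by omega
          rw [he]; exact this
      have := le_csSup hbdd hgap
      omega
    have h2h : h + h ∈ T := by
      have : h - 1 + (h + 1) ∈ T := h0.2.1 _ hTm _ hTp
      have he : h + h = h - 1 + (h + 1) := by omega
      rw [he]; exact this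
    have hstep : stepP T = insert h T := stepP_of_nonempty hne
    rw [hstep]
    refine ⟨⟨Or.inr h0.1, ?_, ?_⟩, fun n hn => Or.inr (htail n hn), ?_, ?_, fun x hx => Or.inr hx⟩
    · rintro a (rfl | ha) b (rfl | hb)
      · exact Or.inr h2h
      · rcases Nat.eq_zero_or_pos b with rfl | hb0
        · simp
        · exact Or.inr (hadd b hb (by omega))
      · rcases Nat.eq_zero_or_pos a with rfl | ha0
        · simpa using Or.inl rfl
        · exact Or.inr ((add_comm a h) ▸ hadd a ha (by omega))
      · exact Or.inr (h0.2.1 a ha b hb)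
    · exact h0.2.2.subset (by intro x hx; simp only [Set.mem_compl_iff, Set.mem_insert_iff] at hx ⊢; tauto)
    · rintro (he | hmm)
      · exact hne2 he.symm
      · exact h1 hmm
    · rintro (he | hmm)
      · exact hne1 he.symm
      · exact h2 hmm
  · rw [stepP_of_empty hne]
    exact ⟨h0, htail, h1, h2, fun x hx => hx⟩

lemma stepP_of_perfect {T : Set ℕ} (hp : IsPerfect T) : stepP T = T := by
  have : ¬ (gapSet T).Nonempty := by
    rintro ⟨x, hx⟩; exact hp x hx
  exact stepP_of_empty this

lemma stepP_ncard_lt {T : Set ℕ} (hfin : Tᶜ.Finite) (hnp : ¬ IsPerfect T) :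
    ((stepP T)ᶜ).ncard < (Tᶜ).ncard := by
  have hne : (gapSet T).Nonempty := by
    simp only [IsPerfect, not_forall, not_not] at hnp
    obtain ⟨h, hh⟩ := hnp; exact ⟨h, hh⟩
  have hbdd : BddAbove (gapSet T) := hfin.bddAbove.mono (fun x hx => hx.1)
  have hmem : sSup (gapSet T) ∈ gapSet T := Nat.sSup_mem hne hbdd
  rw [stepP_of_nonempty hne, compl_insert']
  exact Set.ncard_diff_singleton_lt_of_mem hmem.1 hfin


theorem stmt_18 (m r F : ℕ) (hm : 0 < m) (hmr : m < r) (hrF : r < F)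
    (hdvd : ¬ m ∣ r)
    (hint : {n | ∃ a b : ℕ, n = a * m + b * r} ∩ {F - 1, F} = ∅) :
    ∃ P : Set ℕ,
      IsLeast {T : Set ℕ | IsNumericalSemigroup T ∧ IsPerfect T ∧
        ({n | ∃ a b : ℕ, n = a * m + b * r} ∪ {n | F + 1 ≤ n}) ⊆ T} P ∧
      IsLeast {T : Set ℕ | IsNumericalSemigroup T ∧ IsPerfect T ∧
        HasFrobenius T F ∧ m ∈ T ∧ r ∈ T} P := by
  have hF1 : 1 ≤ F := by omega
  set S0 : Set ℕ := {n | ∃ a b : ℕ, n = a * m + b * r} with hS0def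
  set S : Set ℕ := S0 ∪ {n | F + 1 ≤ n} with hSdef
  -- basic facts about S
  have hFS0 : F ∉ S0 := by
    intro h
    have : F ∈ S0 ∩ {F - 1, F} := ⟨h, Or.inr rfl⟩
    rw [hint] at this; exact this
  have hF1S0 : F - 1 ∉ S0 := by
    intro h
    have : F - 1 ∈ S0 ∩ {F - 1, F} := ⟨h, Or.inl rfl⟩
    rw [hint] at this; exact this
  have hFS : F ∉ S := by
    rintro (h | h)
    · exact hFS0 h
    · simp only [Set.mem_setOf_eq] at h; omega
  have hF1S : F - 1 ∉ S := by
    rintro (h | h)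
    · exact hF1S0 h
    · simp only [Set.mem_setOf_eq] at h; omega
  have htailS : ∀ n, F < n → n ∈ S := fun n hn => Or.inr (by simpa using hn)
  have hSsg : IsNumericalSemigroup S := by
    refine ⟨Or.inl ⟨0, 0, by ring⟩, ?_, ?_⟩
    · rintro a (⟨a1, b1, rfl⟩ | ha) b hb
      · rcases hb with ⟨a2, b2, rfl⟩ | hb
        · exact Or.inl ⟨a1 + a2, b1 + b2, by ring⟩
        · simp only [Set.mem_setOf_eq] at hb ⊢
          exact Or.inr (le_trans hb (Nat.le_add_left _ _))
      · simp only [Set.mem_setOf_eq] at ha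
        exact Or.inr (le_trans ha (Nat.le_add_right _ _))
    · apply Set.Finite.subset (Set.finite_Iic F)
      intro x hx
      simp only [Set.mem_compl_iff, Set.mem_Iic] at hx ⊢
      by_contra hc
      exact hx (htailS x (by omega))
  -- iterate stepP
  set f : ℕ → Set ℕ := fun k => stepP^[k] S with hfdef
  have hfsucc : ∀ k, f (k + 1) = stepP (f k) := by
    intro k
    simp only [hfdef, Function.iterate_succ_apply']
  have hInv : ∀ k, IsNumericalSemigroup (f k) ∧ (∀ n, F < n → n ∈ f k) ∧
      F - 1 ∉ f k ∧ F ∉ f k ∧ S ⊆ f k := by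
    intro k
    induction k with
    | zero => exact ⟨hSsg, htailS, hF1S, hFS, fun x hx => hx⟩
    | succ n ih =>
      obtain ⟨h1, h2, h3, h4, h5⟩ := ih
      obtain ⟨g1, g2, g3, g4, g5⟩ := stepP_spec hF1 h1 h2 h3 h4
      rw [hfsucc]
      exact ⟨g1, g2, g3, g4, h5.trans g5⟩
  have hPerfOr : ∀ k, IsPerfect (f k) ∨ ((f k)ᶜ).ncard + k ≤ (Sᶜ).ncard := by
    intro k
    induction k with
    | zero => exact Or.inr (by simp [hfdef])
    | succ n ih =>
      rcases ih with hp | hc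
      · left; rw [hfsucc, stepP_of_perfect hp]; exact hp
      · by_cases hp : IsPerfect (f n)
        · left; rw [hfsucc, stepP_of_perfect hp]; exact hp
        · right
          have := stepP_ncard_lt (hInv n).1.2.2 hp
          rw [hfsucc]
          omega
  set K := (Sᶜ).ncard + 1 with hKdef
  set W := f K with hWdef
  have hWperf : IsPerfect W := by
    rcases hPerfOr K with hp | hc
    · exact hp
    · omega
  obtain ⟨hWsg, hWtail, hWF1, hWF, hWS⟩ := hInv K
  -- the family of perfect numerical semigroups containing S
  set A : Set (Set ℕ) := {T : Set ℕ | IsNumericalSemigroup T ∧ IsPerfect T ∧ S ⊆ T} with hAdef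
  have hWA : W ∈ A := ⟨hWsg, hWperf, hWS⟩
  set P : Set ℕ := ⋂₀ A with hPdef
  have hSP : S ⊆ P := by
    intro n hn
    rw [hPdef, Set.mem_sInter]
    exact fun T hT => hT.2.2 hn
  have hPW : P ⊆ W := Set.sInter_subset_of_mem hWA
  have hPsg : IsNumericalSemigroup P := by
    refine ⟨?_, ?_, ?_⟩
    · rw [hPdef, Set.mem_sInter]; exact fun T hT => hT.1.1
    · intro a ha b hb
      rw [hPdef, Set.mem_sInter] at ha hb ⊢
      exact fun T hT => hT.1.2.1 a (ha T hT) b (hb T hT)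
    · apply Set.Finite.subset (Set.finite_Iic F)
      intro x hx
      simp only [Set.mem_compl_iff, Set.mem_Iic] at hx ⊢
      by_contra hc
      exact hx (hSP (htailS x (by omega)))
  have hPperf : IsPerfect P := by
    rintro h ⟨hn, hm1, hp1⟩
    rw [hPdef, Set.mem_sInter] at hn
    push_neg at hn
    obtain ⟨T, hTA, hnT⟩ := hn
    have hsub : P ⊆ T := Set.sInter_subset_of_mem hTA
    exact hTA.2.1 h ⟨hnT, hsub hm1, hsub hp1⟩
  refine ⟨P, ⟨⟨hPsg, hPperf, hSP⟩, fun T hT => Set.sInter_subset_of_mem hT⟩, ?_, ?_⟩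
  · refine ⟨hPsg, hPperf, ⟨fun h => hWF (hPW h), fun n hn => hSP (htailS n hn)⟩, ?_, ?_⟩
    · exact hSP (Or.inl ⟨1, 0, by ring⟩)
    · exact hSP (Or.inl ⟨0, 1, by ring⟩)
  · rintro T ⟨hTsg, hTperf, ⟨hTF, hTtail⟩, hmT, hrT⟩
    apply Set.sInter_subset_of_mem
    refine ⟨hTsg, hTperf, ?_⟩
    have hmul : ∀ (a x : ℕ), x ∈ T → a * x ∈ T := by
      intro a x hx
      induction a with
      | zero => simpa using hTsg.1
      | succ n ih =>
        have : n * x + x ∈ T := hTsg.2.1 _ ih _ hx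
        simpa [Nat.succ_mul] using this
    rintro n (⟨a, b, rfl⟩ | hn)
    · exact hTsg.2.1 _ (hmul a m hmT) _ (hmul b r hrT)
    · exact hTtail n (by simpa using hn)
end

section
/- If S is a perfect numerical semigroup with Frobenius number F, a is a minimal generator of S with a < F and not both a-1 ∈ S and a+1 ∈ S, and X ⊆ S is any set with X ∩ Δ(F) = ∅ such that S is the least perfect numerical semigroup with Frobenius number F containing X, then a ∈ X. -/
theorem stmt_19 (S : Set ℕ) (F a : ℕ) (X : Set ℕ)
    (hS : IsNumericalSemigroup S) (hSp : IsPerfect S) (hSF : HasFrobenius S F)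
    (ha : IsMinimalGenerator S a) (haF : a < F)
    (hnb : ¬(a - 1 ∈ S ∧ a + 1 ∈ S))
    (hXS : X ⊆ S) (hXD : X ∩ Delta F = ∅)
    (hleast : IsLeast {T : Set ℕ | IsNumericalSemigroup T ∧ IsPerfect T ∧
      HasFrobenius T F ∧ X ⊆ T} S) :
    a ∈ X := by
  by_contra haX
  obtain ⟨haS, ha0, hamin⟩ := ha
  obtain ⟨h0, hadd, hfin⟩ := hS
  set T : Set ℕ := S \ {a} with hT
  have hTmem : T ∈ {T : Set ℕ | IsNumericalSemigroup T ∧ IsPerfect T ∧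
      HasFrobenius T F ∧ X ⊆ T} := by
    refine ⟨⟨⟨h0, fun h => ha0 (by simpa using h.symm)⟩, ?_, ?_⟩, ?_, ?_, ?_⟩
    · rintro x ⟨hx, hx'⟩ y ⟨hy, hy'⟩
      refine ⟨hadd x hx y hy, fun h => ?_⟩
      simp only [Set.mem_singleton_iff] at h hx' hy'
      rcases eq_or_ne x 0 with rfl | hx0
      · exact hy' (by simpa using h)
      rcases eq_or_ne y 0 with rfl | hy0
      · exact hx' (by simpa using h)
      exact hamin x hx y hy hx0 hy0 h.symm
    · have : Tᶜ ⊆ Sᶜ ∪ {a} := by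
        intro x hx
        simp only [hT, Set.mem_compl_iff, Set.mem_diff, not_and, not_not] at hx
        by_cases hxS : x ∈ S
        · right; simpa using hx hxS
        · left; exact hxS
      exact Set.Finite.subset (hfin.union (Set.finite_singleton a)) this
    · intro h hgap
      obtain ⟨hh, hh1, hh2⟩ := hgap
      simp only [hT, Set.mem_diff, Set.mem_singleton_iff] at hh hh1 hh2
      by_cases hhS : h ∈ S
      · have hha : h = a := by
          by_contra hne
          exact hh ⟨hhS, hne⟩
        subst hha
        exact hnb ⟨hh1.1, hh2.1⟩
      · exact hSp h ⟨hhS, hh1.1, hh2.1⟩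
    · refine ⟨fun h => hSF.1 h.1, fun n hn => ⟨hSF.2 n hn, fun h => ?_⟩⟩
      simp only [Set.mem_singleton_iff] at h
      omega
    · intro x hx
      exact ⟨hXS hx, fun h => haX (by simpa using h ▸ hx)⟩
  have := hleast.2 hTmem haS
  exact this.2 rfl
end
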